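/- If lev(x, y) = 1, then either y is obtained from x by one insertion (so x ∈ D₁(y)), or by one deletion (so y ∈ D₁(x)), or by one substitution, in which case D₁(x) ∩ D₁(y) ≠ ∅; in all cases D₁(x) ∩ D₁(y) ≠ ∅. -/

import Mathlib

/-! Levenshtein distance, as formerly in `Mathlib/Data/List/EditDistance/Defs.lean`
(removed from Mathlib since); reproduced here with its old meaning. -/

namespace Levenshtein

structure Cost (α β δ : Type*) where
  delete : α → δ
  insert : β → δ
  substitute : α → β → δ

def defaultCost {α : Type*} [DecidableEq α] : Cost α α ℕ where
  delete _ := 1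
  insert _ := 1
  substitute a b := if a = b then 0 else 1

def impl {α β δ : Type*} [AddZeroClass δ] [Min δ] (C : Cost α β δ)
    (xs : List α) (y : β) (d : {r : List δ // 0 < r.length}) :
    {r : List δ // 0 < r.length} :=
  let ⟨ds, w⟩ := d
  xs.zip (ds.zip ds.tail) |>.foldr
    (init := ⟨[C.insert y + ds.getLast (List.length_pos_iff.mp w)], by simp⟩)
    (fun ⟨x, d₀, d₁⟩ ⟨r, w⟩ =>
      ⟨min (C.delete x + r[0]) (min (C.insert y + d₀) (C.substitute x y + d₁)) :: r, by simp⟩)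

end Levenshtein

def suffixLevenshtein {α β δ : Type*} [AddZeroClass δ] [Min δ] (C : Levenshtein.Cost α β δ)
    (xs : List α) (ys : List β) : {r : List δ // 0 < r.length} :=
  ys.foldr
    (Levenshtein.impl C xs)
    (xs.foldr (init := ⟨[0], by simp⟩) (fun a ⟨r, w⟩ => ⟨(C.delete a + r[0]) :: r, by simp⟩))

def levenshtein {α β δ : Type*} [AddZeroClass δ] [Min δ] (C : Levenshtein.Cost α β δ)
    (xs : List α) (ys : List β) : δ :=
  let ⟨r, w⟩ := suffixLevenshtein C xs ys
  r[0]

/-!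
Induct along the recursion for `lev (a :: x) (b :: y)`, proving the claim under `lev x y ≤ 1`.
If the minimum is attained by a deletion or an insertion, the remaining distance is `0`, so one
word is the other with its head removed. If it is attained by matching `a = b`, a common element
of `D₁` of the tails extends by `a`; if by substituting `a ≠ b`, the tails are equal and the
common tail lies in both `D₁ (a :: x)` and `D₁ (b :: x)`.
-/

namespace Levenshtein

variable {α β δ : Type*} [AddZeroClass δ] [Min δ] (C : Cost α β δ)

theorem impl_cons (x : α) (xs : List α) (y : β) (d : δ) (ds : List δ) (w) (w' : 0 < ds.length) :
    impl C (x :: xs) y ⟨d :: ds, w⟩ =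
      let ⟨r, w⟩ := impl C xs y ⟨ds, w'⟩
      ⟨min (C.delete x + r[0]) (min (C.insert y + d) (C.substitute x y + ds[0])) :: r,
        by simp⟩ :=
  match ds, w' with | _ :: _, _ => rfl

theorem impl_length (xs : List α) (y : β) (d : {r : List δ // 0 < r.length})
    (w : d.1.length = xs.length + 1) : (impl C xs y d).1.length = xs.length + 1 := by
  induction xs generalizing d with
  | nil => rfl
  | cons x xs ih =>
    match d, w with
    | ⟨d₁ :: d₂ :: ds, _⟩, w =>
      rw [impl_cons C x xs y d₁ (d₂ :: ds) (by simp) (by simp)]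
      simpa using ih ⟨d₂ :: ds, by simp⟩ (by simpa using w)

end Levenshtein

section Recursion

variable {α β δ : Type*} [AddZeroClass δ] [Min δ] (C : Levenshtein.Cost α β δ)

theorem suffixLevenshtein_length (xs : List α) (ys : List β) :
    (suffixLevenshtein C xs ys).1.length = xs.length + 1 := by
  induction ys with
  | nil =>
    induction xs with
    | nil => rfl
    | cons _ xs ih => simpa [suffixLevenshtein] using ih
  | cons y ys ih => exact Levenshtein.impl_length C xs y _ ih

theorem levenshtein_eq_getElem_zero (xs : List α) (ys : List β) :
    levenshtein C xs ys = (suffixLevenshtein C xs ys).1[0]'(suffixLevenshtein C xs ys).2 := rfl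

theorem suffixLevenshtein_cons₁ (x : α) (xs : List α) (ys : List β) :
    suffixLevenshtein C (x :: xs) ys =
      ⟨levenshtein C (x :: xs) ys :: (suffixLevenshtein C xs ys).1, by simp⟩ := by
  cases ys with
  | nil => rfl
  | cons y ys =>
    have htail : (suffixLevenshtein C (x :: xs) (y :: ys)).1.tail =
        (suffixLevenshtein C xs (y :: ys)).1 := by
      show (Levenshtein.impl C (x :: xs) y (suffixLevenshtein C (x :: xs) ys)).1.tail = _
      rw [suffixLevenshtein_cons₁ x xs ys,
        Levenshtein.impl_cons (w' := by simp [suffixLevenshtein_length])]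
      rfl
    apply Subtype.ext
    dsimp only
    rw [levenshtein_eq_getElem_zero, ← htail, List.getElem_zero_eq_head, List.cons_head_tail]

@[simp] theorem levenshtein_cons_nil (x : α) (xs : List α) :
    levenshtein C (x :: xs) ([] : List β) = C.delete x + levenshtein C xs [] := rfl

@[simp] theorem levenshtein_nil_cons (y : β) (ys : List β) :
    levenshtein C ([] : List α) (y :: ys) = C.insert y + levenshtein C [] ys := by
  have hlen := suffixLevenshtein_length C ([] : List α) ys
  rw [levenshtein_eq_getElem_zero, levenshtein_eq_getElem_zero]
  change (Levenshtein.impl C [] y (suffixLevenshtein C [] ys)).1[0]'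
    (Levenshtein.impl C [] y (suffixLevenshtein C [] ys)).2 = _
  generalize suffixLevenshtein C [] ys = s at hlen ⊢
  obtain ⟨_ | ⟨d, _ | _⟩, _⟩ := s <;> simp at hlen
  rfl

theorem levenshtein_cons_cons (x : α) (xs : List α) (y : β) (ys : List β) :
    levenshtein C (x :: xs) (y :: ys) =
      min (C.delete x + levenshtein C xs (y :: ys))
        (min (C.insert y + levenshtein C (x :: xs) ys)
          (C.substitute x y + levenshtein C xs ys)) := by
  rw [levenshtein_eq_getElem_zero]
  change (Levenshtein.impl C (x :: xs) y (suffixLevenshtein C (x :: xs) ys)).1[0]'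
    (Levenshtein.impl C (x :: xs) y (suffixLevenshtein C (x :: xs) ys)).2 = _
  rw [suffixLevenshtein_cons₁, Levenshtein.impl_cons (w' := by simp [suffixLevenshtein_length])]
  rfl

end Recursion

section DefaultCost

variable {σ : Type*} [DecidableEq σ]

@[simp] theorem Levenshtein.defaultCost_delete (a : σ) :
    (Levenshtein.defaultCost : Levenshtein.Cost σ σ ℕ).delete a = 1 := rfl

@[simp] theorem Levenshtein.defaultCost_insert (a : σ) :
    (Levenshtein.defaultCost : Levenshtein.Cost σ σ ℕ).insert a = 1 := rfl

theorem levenshtein_defaultCost_nil_right (x : List σ) :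
    levenshtein Levenshtein.defaultCost x [] = x.length := by
  induction x with
  | nil => rfl
  | cons a x ih => simp [ih, add_comm]

theorem levenshtein_defaultCost_nil_left (y : List σ) :
    levenshtein Levenshtein.defaultCost [] y = y.length := by
  induction y with
  | nil => rfl
  | cons b y ih => simp [ih, add_comm]

theorem levenshtein_defaultCost_cons_cons (a b : σ) (x y : List σ) :
    levenshtein Levenshtein.defaultCost (a :: x) (b :: y) =
      min (1 + levenshtein Levenshtein.defaultCost x (b :: y))
        (min (1 + levenshtein Levenshtein.defaultCost (a :: x) y)
          ((if a = b then 0 else 1) + levenshtein Levenshtein.defaultCost x y)) :=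
  levenshtein_cons_cons _ a x b y

theorem eq_of_levenshtein_defaultCost_eq_zero {x y : List σ}
    (h : levenshtein Levenshtein.defaultCost x y = 0) : x = y := by
  induction x generalizing y with
  | nil => simpa [levenshtein_defaultCost_nil_left, eq_comm] using h
  | cons a x ih =>
    cases y with
    | nil => simp [levenshtein_defaultCost_nil_right] at h
    | cons b y =>
      rw [levenshtein_defaultCost_cons_cons] at h
      obtain ⟨hab, hxy⟩ := Nat.add_eq_zero_iff.mp (by omega :
        (if a = b then 0 else 1) + levenshtein Levenshtein.defaultCost x y = 0)
      rw [show a = b by simpa using hab, ih hxy]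

end DefaultCost

namespace List

variable {α : Type*}

/-- The paper's `D₁(x)`: `x` and the words obtained from it by deleting one character. -/
def withinOneDeletion (x : List α) : Set (List α) :=
  {z | z.Sublist x ∧ x.length ≤ z.length + 1}

theorem self_mem_withinOneDeletion (x : List α) : x ∈ withinOneDeletion x :=
  ⟨Sublist.refl x, by omega⟩

theorem mem_withinOneDeletion_cons (a : α) (x : List α) : x ∈ withinOneDeletion (a :: x) :=
  ⟨sublist_cons_self a x, by simp⟩

theorem cons_mem_withinOneDeletion_cons {z x : List α} (a : α) (h : z ∈ withinOneDeletion x) :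
    a :: z ∈ withinOneDeletion (a :: x) :=
  ⟨h.1.cons_cons a, by simpa using h.2⟩

theorem nil_mem_withinOneDeletion {x : List α} (h : x.length ≤ 1) : [] ∈ withinOneDeletion x :=
  ⟨nil_sublist x, h⟩

theorem withinOneDeletion_inter_nonempty_of_levenshtein_le_one [DecidableEq α] {x y : List α}
    (h : levenshtein Levenshtein.defaultCost x y ≤ 1) :
    (withinOneDeletion x ∩ withinOneDeletion y).Nonempty := by
  induction x generalizing y with
  | nil =>
    rw [levenshtein_defaultCost_nil_left] at h
    exact ⟨[], nil_mem_withinOneDeletion (by simp), nil_mem_withinOneDeletion h⟩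
  | cons a x ih =>
    cases y with
    | nil =>
      rw [levenshtein_defaultCost_nil_right] at h
      exact ⟨[], nil_mem_withinOneDeletion h, nil_mem_withinOneDeletion (by simp)⟩
    | cons b y =>
      rw [levenshtein_defaultCost_cons_cons] at h
      rcases min_le_iff.mp h with hdel | h
      · obtain rfl : x = b :: y := eq_of_levenshtein_defaultCost_eq_zero (by omega)
        exact ⟨b :: y, mem_withinOneDeletion_cons a _, self_mem_withinOneDeletion _⟩
      rcases min_le_iff.mp h with hins | hsub
      · obtain rfl : a :: x = y := eq_of_levenshtein_defaultCost_eq_zero (by omega)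
        exact ⟨a :: x, self_mem_withinOneDeletion _, mem_withinOneDeletion_cons b _⟩
      by_cases hab : a = b
      · subst hab
        obtain ⟨z, hzx, hzy⟩ := ih (by simpa using hsub)
        exact ⟨a :: z, cons_mem_withinOneDeletion_cons a hzx, cons_mem_withinOneDeletion_cons a hzy⟩
      · obtain rfl : x = y := eq_of_levenshtein_defaultCost_eq_zero (by simp [hab] at hsub; omega)
        exact ⟨x, mem_withinOneDeletion_cons a x, mem_withinOneDeletion_cons b x⟩

end List

/-- If `lev(x,y) = 1` then `D₁(x) ∩ D₁(y) ≠ ∅`, where `D₁(w)` consists of `w`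
together with all of its one-character-deletion variants. -/
theorem symdel_one_edit {σ : Type*} [DecidableEq σ] (x y : List σ)
    (h : levenshtein Levenshtein.defaultCost x y = 1) :
    ∃ z : List σ, z.Sublist x ∧ x.length ≤ z.length + 1 ∧
      z.Sublist y ∧ y.length ≤ z.length + 1 := by
  obtain ⟨z, ⟨hzx, hx⟩, hzy, hy⟩ :=
    List.withinOneDeletion_inter_nonempty_of_levenshtein_le_one h.le
  exact ⟨z, hzx, hx, hzy, hy⟩
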